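/- arXiv:1802.03546 — 7 statements merged into one kernel-verified Lean document; each statement's English description precedes it below -/
import Mathlib

section
/- Let Γ = (Γ₀, Γ₁, C, s, t, u) be a colored quiver and let f, g ∈ K⟨⟨C⟩⟩ be admissible elements, i.e., for every vertex v the set P_v(supp f) of paths r in Γ with t(r) = v and u(r) ∈ supp f is finite, and similarly for g. Then the product fg is admissible. Consequently the set F_Γ of admissible elements is a K-subalgebra of K⟨⟨C⟩⟩. -/
open scoped BigOperators Classical

/-- The formal monoid algebra `K⟨⟨C⟩⟩` is modeled as functions `FreeMonoid C → K`.
This is its convolution multiplication. -/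
noncomputable def fmaMul {K C : Type*} [Field K] (f g : FreeMonoid C → K) :
    FreeMonoid C → K :=
  fun c => ∑ᶠ p : FreeMonoid C × FreeMonoid C,
    if p.1 * p.2 = c then f p.1 * g p.2 else 0

/-- The identity element of `K⟨⟨C⟩⟩`. -/
noncomputable def fmaOne {K C : Type*} [Field K] : FreeMonoid C → K :=
  fun c => if c = 1 then 1 else 0

/-- The support of an element of `K⟨⟨C⟩⟩`. -/
def fmaSupp {K C : Type*} [Field K] (f : FreeMonoid C → K) : Set (FreeMonoid C) :=
  {c | f c ≠ 0}

/-- A colored quiver `Γ = (Γ₀, Γ₁, C, s, t, u)`. -/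
structure ColoredQuiver where
  V : Type
  A : Type
  Cl : Type
  s : A → V
  t : A → V
  u : A → Cl

/-- Paths in a colored quiver, from a source vertex to a target vertex. -/
inductive CQPath (Γ : ColoredQuiver) : Γ.V → Γ.V → Type
  | nil (v : Γ.V) : CQPath Γ v v
  | cons (r : Γ.A) {w : Γ.V} (p : CQPath Γ (Γ.t r) w) : CQPath Γ (Γ.s r) w

/-- The sequence of colors of a path, as an element of the free monoid on colors. -/
def CQPath.colors {Γ : ColoredQuiver} : ∀ {v w : Γ.V}, CQPath Γ v w → FreeMonoid Γ.Cl
  | _, _, .nil _ => 1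
  | _, _, .cons r p => FreeMonoid.of (Γ.u r) * p.colors

/-- Concatenation of paths. -/
def CQPath.comp {Γ : ColoredQuiver} :
    ∀ {a b c : Γ.V}, CQPath Γ a b → CQPath Γ b c → CQPath Γ a c
  | _, _, _, .nil _, q => q
  | _, _, _, .cons r p, q => .cons r (p.comp q)

/-- `P_v(B)`: the set of paths with target `v` whose color sequence lies in `B`
(paths are recorded together with their source vertex). -/
def pathsTo (Γ : ColoredQuiver) (v : Γ.V) (B : Set (FreeMonoid Γ.Cl)) :
    Set (Σ w : Γ.V, CQPath Γ w v) :=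
  {p | p.2.colors ∈ B}

/-- An element of `K⟨⟨C⟩⟩` is admissible if `P_v(supp f)` is finite for every vertex. -/
def Admissible {K : Type*} [Field K] (Γ : ColoredQuiver) (f : FreeMonoid Γ.Cl → K) : Prop :=
  ∀ v : Γ.V, (pathsTo Γ v (fmaSupp f)).Finite


/-! A path whose color sequence factors as `c₁ c₂` splits into a path colored `c₁` followed by a
path colored `c₂`. Since `supp (fg) ⊆ supp f · supp g`, a path in `P_v(supp fg)` is therefore a
path of `P_{v'}(supp f)` followed by a path of `P_v(supp g)` starting at `v'`: finitely many
choices for the second piece, and then finitely many for the first. -/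

open Pointwise

lemma FreeMonoid.of_mul_eq_of_mul_iff {α : Type*} {a b : α} {x y : FreeMonoid α} :
    FreeMonoid.of a * x = FreeMonoid.of b * y ↔ a = b ∧ x = y := by
  rw [← FreeMonoid.toList.injective.eq_iff, FreeMonoid.toList_of_mul, FreeMonoid.toList_of_mul,
    List.cons_eq_cons, FreeMonoid.toList.injective.eq_iff]

section Supports

variable {K C : Type*} [Field K]

lemma fmaSupp_fmaMul_subset (f g : FreeMonoid C → K) :
    fmaSupp (fmaMul f g) ⊆ fmaSupp f * fmaSupp g := by
  intro c hc
  obtain ⟨⟨a, b⟩, hab⟩ : ∃ p : FreeMonoid C × FreeMonoid C,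
      (if p.1 * p.2 = c then f p.1 * g p.2 else 0) ≠ 0 := by
    by_contra! h
    exact hc (finsum_eq_zero_of_forall_eq_zero h)
  by_cases hc : a * b = c
  · rw [if_pos hc] at hab
    exact ⟨a, left_ne_zero_of_mul hab, b, right_ne_zero_of_mul hab, hc⟩
  · exact absurd (if_neg hc) hab

lemma fmaSupp_add_subset (f g : FreeMonoid C → K) :
    fmaSupp (f + g) ⊆ fmaSupp f ∪ fmaSupp g := by
  intro c hc
  by_contra! h
  simp_all [fmaSupp]

lemma fmaSupp_smul_subset (a : K) (f : FreeMonoid C → K) : fmaSupp (a • f) ⊆ fmaSupp f :=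
  fun _ hc hf => hc (by simp [hf])

lemma fmaSupp_fmaOne_subset : fmaSupp (fmaOne : FreeMonoid C → K) ⊆ {1} := by
  intro c hc
  by_contra h
  exact hc (if_neg h)

end Supports

namespace CQPath

variable {Γ : ColoredQuiver}

lemma exists_comp_eq_of_colors_eq_mul {w v : Γ.V} (r : CQPath Γ w v)
    {c₁ c₂ : FreeMonoid Γ.Cl} (h : r.colors = c₁ * c₂) :
    ∃ (m : Γ.V) (r₁ : CQPath Γ w m) (r₂ : CQPath Γ m v),
      r₁.comp r₂ = r ∧ r₁.colors = c₁ ∧ r₂.colors = c₂ := by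
  induction r generalizing c₁ with
  | nil v =>
    obtain ⟨rfl, rfl⟩ := mul_eq_one'.mp h.symm
    exact ⟨v, .nil v, .nil v, rfl, rfl, rfl⟩
  | cons a p ih =>
    induction c₁ using FreeMonoid.casesOn with
    | one => exact ⟨_, .nil _, .cons a p, rfl, rfl, by rw [h, one_mul]⟩
    | of_mul x xs =>
      rw [colors, mul_assoc, FreeMonoid.of_mul_eq_of_mul_iff] at h
      obtain ⟨m, r₁, r₂, rfl, rfl, rfl⟩ := ih h.2
      exact ⟨m, .cons a r₁, r₂, rfl, by rw [colors, h.1], rfl⟩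

lemma eq_nil_of_colors_eq_one {w v : Γ.V} (r : CQPath Γ w v) (h : r.colors = 1) :
    (⟨w, r⟩ : Σ w : Γ.V, CQPath Γ w v) = ⟨v, .nil v⟩ := by
  cases r with
  | nil => rfl
  | cons a p => exact absurd h (by simp [colors])

end CQPath

section PathsTo

variable {Γ : ColoredQuiver}

lemma pathsTo_mono {v : Γ.V} {B B' : Set (FreeMonoid Γ.Cl)} (h : B ⊆ B') :
    pathsTo Γ v B ⊆ pathsTo Γ v B' :=
  fun _ hr => h hr

lemma pathsTo_union (v : Γ.V) (B B' : Set (FreeMonoid Γ.Cl)) :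
    pathsTo Γ v (B ∪ B') = pathsTo Γ v B ∪ pathsTo Γ v B' :=
  rfl

lemma pathsTo_one_subset (v : Γ.V) :
    pathsTo Γ v {1} ⊆ {⟨v, .nil v⟩} :=
  fun r hr => r.2.eq_nil_of_colors_eq_one hr

lemma pathsTo_mul_subset (v : Γ.V) (B B' : Set (FreeMonoid Γ.Cl)) :
    pathsTo Γ v (B * B') ⊆ ⋃ q ∈ pathsTo Γ v B',
      (fun p : Σ w : Γ.V, CQPath Γ w q.1 => (⟨p.1, p.2.comp q.2⟩ : Σ w : Γ.V, CQPath Γ w v)) ''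
        pathsTo Γ q.1 B := by
  rintro ⟨w, r⟩ ⟨c₁, hc₁, c₂, hc₂, hr⟩
  obtain ⟨m, r₁, r₂, rfl, rfl, rfl⟩ := r.exists_comp_eq_of_colors_eq_mul hr.symm
  exact Set.mem_biUnion (x := ⟨m, r₂⟩) hc₂ ⟨(⟨w, r₁⟩ : Σ w : Γ.V, CQPath Γ w m), hc₁, rfl⟩

lemma pathsTo_mul_finite {B B' : Set (FreeMonoid Γ.Cl)} (hB : ∀ v, (pathsTo Γ v B).Finite)
    (hB' : ∀ v, (pathsTo Γ v B').Finite) (v : Γ.V) : (pathsTo Γ v (B * B')).Finite :=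
  ((hB' v).biUnion fun q _ => (hB q.1).image _).subset (pathsTo_mul_subset v B B')

end PathsTo

/-- the product of admissible elements is admissible; consequently the set
`F_Γ` of admissible elements is a `K`-subalgebra of `K⟨⟨C⟩⟩`. -/
theorem admissible_closed (K : Type*) [Field K] (Γ : ColoredQuiver)
    (f g : FreeMonoid Γ.Cl → K) (hf : Admissible Γ f) (hg : Admissible Γ g) :
    Admissible Γ (fmaMul f g) ∧
    Admissible Γ (f + g) ∧
    (∀ a : K, Admissible Γ (a • f)) ∧
    Admissible Γ (fmaOne : FreeMonoid Γ.Cl → K) := by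
  refine ⟨fun v => ?_, fun v => ?_, fun a v => ?_, fun v => ?_⟩
  · exact (pathsTo_mul_finite hf hg v).subset (pathsTo_mono (fmaSupp_fmaMul_subset f g))
  · exact ((hf v).union (hg v)).subset
      ((pathsTo_union v _ _).symm ▸ pathsTo_mono (fmaSupp_add_subset f g))
  · exact (hf v).subset (pathsTo_mono (fmaSupp_smul_subset a f))
  · exact (Set.finite_singleton _).subset
      ((pathsTo_mono fmaSupp_fmaOne_subset).trans (pathsTo_one_subset v))
end

section
/- Let Γ = (Γ₀, Γ₁, C) be a colored quiver. The formula (∑_v μ_v x_v)·(∑_c λ_c c) = ∑_r λ_{u(r)} μ_{s(r)} x_{t(r)}, where r ranges over all paths in Γ, gives M_Γ = ∏_{v ∈ Γ₀} K x_v the structure of a right module over the algebra F_Γ of admissible elements. -/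
open scoped BigOperators Classical

/-- The action of `f ∈ K⟨⟨C⟩⟩` on `y ∈ M_Γ = ∏_v K x_v`:
`(y·f)(t(r)) = ∑_r λ_{u(r)} μ_{s(r)}`, the sum running over paths `r`
(well defined when `f` is admissible). -/
noncomputable def cqAct {K : Type*} [Field K] {Γ : ColoredQuiver} (y : Γ.V → K)
    (f : FreeMonoid Γ.Cl → K) : Γ.V → K :=
  fun w => ∑ᶠ p : Σ a : Γ.V, CQPath Γ a w, f p.2.colors * y p.1

/-! Both `y · (f g)` and `(y · f) · g` evaluate at `w` to the sum of `g (u q) * f (u p) * y a` over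
composable pairs of paths `p : a ⟶ b`, `q : b ⟶ w`: a path `r` together with a factorization
`u r = c₁ c₂` of its color word splits uniquely as `r = p q` with `u p = c₁` and `u q = c₂`.
Admissibility of `f` and `g` leaves only finitely many contributing pairs, which justifies
reindexing and exchanging the sums; the other module axioms hold termwise. -/

open Function Set

theorem finsum_sigma {ι : Type*} {π : ι → Type*} {M : Type*} [AddCommMonoid M]
    (f : (Σ i, π i) → M) (hf : (support f).Finite) :
    ∑ᶠ x, f x = ∑ᶠ (i) (j), f ⟨i, j⟩ := by
  classical
  set s := hf.toFinset
  let t : ∀ i, Finset (π i) := fun i => s.preimage (Sigma.mk i) sigma_mk_injective.injOn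
  have hs : ∀ x, f x ≠ 0 → x ∈ s := fun x hx => hf.mem_toFinset.2 hx
  have hinner : ∀ i, ∑ᶠ j, f ⟨i, j⟩ = ∑ j ∈ t i, f ⟨i, j⟩ := fun i =>
    finsum_eq_sum_of_support_subset _ fun j hj => by simpa [t] using hs _ hj
  have houter : support (fun i => ∑ᶠ j, f ⟨i, j⟩) ⊆ ↑(s.image Sigma.fst) := fun i hi => by
    obtain ⟨j, hj⟩ : ∃ j, f ⟨i, j⟩ ≠ 0 := by
      by_contra! h
      exact hi (finsum_eq_zero_of_forall_eq_zero h)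
    exact Finset.mem_image.2 ⟨_, hs _ hj, rfl⟩
  have hsigma : support f ⊆ ↑((s.image Sigma.fst).sigma t) := fun x hx => by
    simpa [t] using ⟨⟨x.2, hs x hx⟩, hs x hx⟩
  rw [finsum_eq_sum_of_support_subset _ houter, finsum_eq_sum_of_support_subset f hsigma,
    Finset.sum_sigma]
  exact Finset.sum_congr rfl fun i _ => (hinner i).symm

namespace CQPath

variable {Γ : ColoredQuiver}

@[simp]
theorem colors_nil (v : Γ.V) : (CQPath.nil v).colors = 1 := rfl

@[simp]
theorem colors_cons (r : Γ.A) {w : Γ.V} (p : CQPath Γ (Γ.t r) w) :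
    (CQPath.cons r p).colors = FreeMonoid.of (Γ.u r) * p.colors := rfl

theorem colors_comp : ∀ {a b c : Γ.V} (p : CQPath Γ a b) (q : CQPath Γ b c),
    (p.comp q).colors = p.colors * q.colors
  | _, _, _, .nil _, _ => (one_mul _).symm
  | _, _, _, .cons r p, q => by rw [comp, colors_cons, colors_cons, colors_comp p q, mul_assoc]

theorem sigma_eq_nil_of_colors_eq_one {a w : Γ.V} (p : CQPath Γ a w) (h : p.colors = 1) :
    (⟨a, p⟩ : Σ v, CQPath Γ v w) = ⟨w, .nil w⟩ := by
  cases p with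
  | nil => rfl
  | cons r p => simp [← FreeMonoid.length_eq_zero] at h

def splitAt : ∀ {a w : Γ.V}, CQPath Γ a w → ℕ → Σ b, CQPath Γ a b × CQPath Γ b w
  | _, _, p, 0 => ⟨_, .nil _, p⟩
  | _, _, .nil v, _ + 1 => ⟨v, .nil v, .nil v⟩
  | _, _, .cons r p, n + 1 => ⟨_, .cons r (p.splitAt n).2.1, (p.splitAt n).2.2⟩

theorem splitAt_comp : ∀ {a b w : Γ.V} (p : CQPath Γ a b) (q : CQPath Γ b w),
    (p.comp q).splitAt p.colors.length = ⟨b, p, q⟩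
  | _, _, _, .nil _, _ => by simp [comp, splitAt]
  | _, _, _, .cons r p, q => by
    simp only [comp, colors_cons, FreeMonoid.length_mul, FreeMonoid.length_of, add_comm 1, splitAt]
    rw [splitAt_comp p q]

theorem exists_comp_eq_of_colors_eq_mul_s6 : ∀ {a w : Γ.V} (p : CQPath Γ a w)
    (c₁ c₂ : FreeMonoid Γ.Cl), p.colors = c₁ * c₂ →
    ∃ (b : Γ.V) (p₁ : CQPath Γ a b) (p₂ : CQPath Γ b w),
      p₁.comp p₂ = p ∧ p₁.colors = c₁ ∧ p₂.colors = c₂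
  | _, _, .nil v, c₁, c₂, h => by
    obtain ⟨rfl, rfl⟩ := mul_eq_one'.1 h.symm
    exact ⟨v, .nil v, .nil v, rfl, rfl, rfl⟩
  | _, _, .cons r p, c₁, c₂, h => by
    induction c₁ using FreeMonoid.casesOn with
    | one => exact ⟨_, .nil _, .cons r p, rfl, rfl, by rw [h, one_mul]⟩
    | of_mul x c₁ =>
      rw [colors_cons, mul_assoc] at h
      obtain ⟨rfl, htail⟩ : Γ.u r = x ∧ p.colors = c₁ * c₂ := by
        rwa [← FreeMonoid.toList.apply_eq_iff_eq, FreeMonoid.toList_of_mul, FreeMonoid.toList_of_mul,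
          List.cons.injEq, FreeMonoid.toList.apply_eq_iff_eq] at h
      obtain ⟨b, p₁, p₂, rfl, rfl, rfl⟩ := exists_comp_eq_of_colors_eq_mul_s6 p _ _ htail
      exact ⟨b, .cons r p₁, p₂, rfl, rfl, rfl⟩

end CQPath

section Action

variable {K : Type*} [Field K] {Γ : ColoredQuiver}

theorem cqAct_apply (y : Γ.V → K) (f : FreeMonoid Γ.Cl → K) (w : Γ.V) :
    cqAct y f w = ∑ᶠ p : Σ a, CQPath Γ a w, f p.2.colors * y p.1 := rfl

theorem Admissible.finite_support_cqAct_summand {f : FreeMonoid Γ.Cl → K} (hf : Admissible Γ f)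
    (y : Γ.V → K) (w : Γ.V) :
    (support fun p : Σ a, CQPath Γ a w => f p.2.colors * y p.1).Finite :=
  (hf w).subset fun _ hp => left_ne_zero_of_mul hp

theorem cqAct_fmaOne (y : Γ.V → K) : cqAct y fmaOne = y := by
  funext w
  rw [cqAct_apply, finsum_eq_single _ ⟨w, .nil w⟩]
  · simp [fmaOne]
  · intro p hp
    have hcolors : p.2.colors ≠ 1 := fun h => hp (CQPath.sigma_eq_nil_of_colors_eq_one p.2 h)
    simp [fmaOne, hcolors]

theorem add_cqAct {f : FreeMonoid Γ.Cl → K} (hf : Admissible Γ f) (y z : Γ.V → K) :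
    cqAct (y + z) f = cqAct y f + cqAct z f := by
  funext w
  simp only [Pi.add_apply, cqAct_apply, mul_add]
  exact finsum_add_distrib (hf.finite_support_cqAct_summand y w)
    (hf.finite_support_cqAct_summand z w)

theorem cqAct_add {f g : FreeMonoid Γ.Cl → K} (hf : Admissible Γ f) (hg : Admissible Γ g)
    (y : Γ.V → K) : cqAct y (f + g) = cqAct y f + cqAct y g := by
  funext w
  simp only [Pi.add_apply, cqAct_apply, add_mul]
  exact finsum_add_distrib (hf.finite_support_cqAct_summand y w)
    (hg.finite_support_cqAct_summand y w)

theorem smul_cqAct (a : K) (y : Γ.V → K) (f : FreeMonoid Γ.Cl → K) :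
    cqAct (a • y) f = a • cqAct y f := by
  funext w
  simp only [Pi.smul_apply, smul_eq_mul, cqAct_apply, mul_finsum, mul_left_comm]

theorem cqAct_smul (a : K) (y : Γ.V → K) (f : FreeMonoid Γ.Cl → K) :
    cqAct y (a • f) = a • cqAct y f := by
  funext w
  simp only [Pi.smul_apply, smul_eq_mul, cqAct_apply, mul_finsum, mul_assoc]

end Action

-- Pairs `(q, p)` with `p : a ⟶ b`, `q : b ⟶ w`; `q` is outermost, as in `cqAct (cqAct y f) g`.
abbrev ComposablePaths (Γ : ColoredQuiver) (w : Γ.V) :=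
  Σ q : Σ b, CQPath Γ b w, Σ a, CQPath Γ a q.1

namespace ComposablePaths

variable {Γ : ColoredQuiver} {w : Γ.V}

def compAndColors (d : ComposablePaths Γ w) :
    (Σ a, CQPath Γ a w) × (FreeMonoid Γ.Cl × FreeMonoid Γ.Cl) :=
  (⟨d.2.1, d.2.2.comp d.1.2⟩, (d.2.2.colors, d.1.2.colors))

theorem compAndColors_injective : Injective (compAndColors (Γ := Γ) (w := w)) := by
  refine LeftInverse.injective (g := fun e =>
    let s := e.1.2.splitAt e.2.1.length
    (⟨⟨s.1, s.2.2⟩, ⟨e.1.1, s.2.1⟩⟩ : ComposablePaths Γ w)) ?_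
  rintro ⟨⟨b, q⟩, ⟨a, p⟩⟩
  dsimp only [compAndColors]
  rw [CQPath.splitAt_comp p q]

theorem mem_range_compAndColors {e : (Σ a, CQPath Γ a w) × (FreeMonoid Γ.Cl × FreeMonoid Γ.Cl)}
    (he : e.2.1 * e.2.2 = e.1.2.colors) : e ∈ range compAndColors := by
  obtain ⟨⟨a, r⟩, c₁, c₂⟩ := e
  obtain ⟨b, p, q, rfl, rfl, rfl⟩ := CQPath.exists_comp_eq_of_colors_eq_mul_s6 r c₁ c₂ he.symm
  exact ⟨⟨⟨b, q⟩, ⟨a, p⟩⟩, rfl⟩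

theorem finite_setOf_colors_mem_fmaSupp {K : Type*} [Field K] {f g : FreeMonoid Γ.Cl → K}
    (hf : Admissible Γ f) (hg : Admissible Γ g) :
    {d : ComposablePaths Γ w | d.1.2.colors ∈ fmaSupp g ∧ d.2.2.colors ∈ fmaSupp f}.Finite :=
  ((hg w).biUnion fun q _ => (hf q.1).image (Sigma.mk q)).subset fun d hd =>
    mem_biUnion hd.1 ⟨d.2, hd.2, rfl⟩

end ComposablePaths

section Associativity

open ComposablePaths

variable {K : Type*} [Field K] {Γ : ColoredQuiver} {f g : FreeMonoid Γ.Cl → K}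

theorem cqAct_fmaMul_apply (hf : Admissible Γ f) (hg : Admissible Γ g) (y : Γ.V → K) (w : Γ.V) :
    cqAct y (fmaMul f g) w =
      ∑ᶠ d : ComposablePaths Γ w, g d.1.2.colors * (f d.2.2.colors * y d.2.1) := by
  set F : (Σ a, CQPath Γ a w) × (FreeMonoid Γ.Cl × FreeMonoid Γ.Cl) → K := fun e =>
    if e.2.1 * e.2.2 = e.1.2.colors then f e.2.1 * g e.2.2 * y e.1.1 else 0
  have hF : ∀ d, F (compAndColors d) = g d.1.2.colors * (f d.2.2.colors * y d.2.1) := fun d => by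
    simp only [F, compAndColors, CQPath.colors_comp, if_true]
    ring
  have hrange : support F ⊆ range compAndColors := fun e he =>
    mem_range_compAndColors (of_not_not fun h => he (if_neg h))
  have hfin : (support F).Finite :=
    ((finite_setOf_colors_mem_fmaSupp hf hg).image compAndColors).subset fun e he => by
      obtain ⟨d, rfl⟩ := hrange he
      rw [mem_support, hF] at he
      exact ⟨d, ⟨left_ne_zero_of_mul he, left_ne_zero_of_mul (right_ne_zero_of_mul he)⟩, rfl⟩
  calc cqAct y (fmaMul f g) w = ∑ᶠ (p) (c), F (p, c) := by
        simp only [cqAct_apply, fmaMul, finsum_mul, ite_mul, zero_mul, F]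
    _ = ∑ᶠ e, F e := (finsum_curry F hfin).symm
    _ = ∑ᶠ d, F (compAndColors d) := by
        rw [← finsum_mem_range compAndColors_injective, ← finsum_mem_univ F]
        exact finsum_mem_inter_support_eq' F _ _ fun e he => by simp [hrange he]
    _ = _ := finsum_congr hF

theorem cqAct_cqAct_apply (hf : Admissible Γ f) (hg : Admissible Γ g) (y : Γ.V → K) (w : Γ.V) :
    cqAct (cqAct y f) g w =
      ∑ᶠ d : ComposablePaths Γ w, g d.1.2.colors * (f d.2.2.colors * y d.2.1) := by
  rw [finsum_sigma (fun d : ComposablePaths Γ w => g d.1.2.colors * (f d.2.2.colors * y d.2.1))]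
  · simp only [cqAct_apply, mul_finsum]
  · refine (finite_setOf_colors_mem_fmaSupp hf hg).subset fun d hd => ?_
    exact ⟨left_ne_zero_of_mul hd, left_ne_zero_of_mul (right_ne_zero_of_mul hd)⟩

theorem cqAct_fmaMul (hf : Admissible Γ f) (hg : Admissible Γ g) (y : Γ.V → K) :
    cqAct y (fmaMul f g) = cqAct (cqAct y f) g := by
  funext w
  rw [cqAct_fmaMul_apply hf hg, cqAct_cqAct_apply hf hg]

end Associativity

/-- the formula `(∑_v μ_v x_v)·(∑_c λ_c c) = ∑_r λ_{u(r)} μ_{s(r)} x_{t(r)}`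
gives `M_Γ = ∏_v K x_v` the structure of a right module over the algebra `F_Γ` of
admissible elements. -/
theorem cqAct_module_structure (K : Type*) [Field K] (Γ : ColoredQuiver) :
    (∀ y : Γ.V → K, cqAct y (fmaOne : FreeMonoid Γ.Cl → K) = y) ∧
    (∀ (y : Γ.V → K) (f g : FreeMonoid Γ.Cl → K), Admissible Γ f → Admissible Γ g →
      cqAct y (fmaMul f g) = cqAct (cqAct y f) g) ∧
    (∀ (y z : Γ.V → K) (f : FreeMonoid Γ.Cl → K), Admissible Γ f →
      cqAct (y + z) f = cqAct y f + cqAct z f) ∧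
    (∀ (y : Γ.V → K) (f g : FreeMonoid Γ.Cl → K), Admissible Γ f → Admissible Γ g →
      cqAct y (f + g) = cqAct y f + cqAct y g) ∧
    (∀ (a : K) (y : Γ.V → K) (f : FreeMonoid Γ.Cl → K), Admissible Γ f →
      cqAct (a • y) f = a • cqAct y f ∧ cqAct y (a • f) = a • cqAct y f) :=
  ⟨cqAct_fmaOne,
    fun y _ _ hf hg => cqAct_fmaMul hf hg y,
    fun y z _ hf => add_cqAct hf y z,
    fun y _ _ hf hg => cqAct_add hf hg y,
    fun a y f _ => ⟨smul_cqAct a y f, cqAct_smul a y f⟩⟩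
end

section
/- Let R be a commutative ring. An R-module H is monoform if for every nonzero submodule L of H, no nonzero submodule of H is isomorphic to a submodule of H/L. If p is a prime ideal of R, then R/p is a monoform R-module. -/
open scoped BigOperators Classical

/-- A module `H` is monoform if for every nonzero submodule `L` of `H`, no nonzero
submodule of `H` embeds into `H ⧸ L`. -/
def IsMonoform (R H : Type*) [Ring R] [AddCommGroup H] [Module R H] : Prop :=
  ∀ L : Submodule R H, L ≠ ⊥ →
    ∀ N : Submodule R H, ∀ f : N →ₗ[R] H ⧸ L, Function.Injective f → N = ⊥

/-- Such an `a` kills `H ⧸ L`, hence every submodule embedding into it, and acts injectively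
on `H`, so such a submodule is zero. -/
theorem isMonoform_of_exists_smul_mem {R H : Type*} [Ring R] [AddCommGroup H] [Module R H]
    (h : ∀ L : Submodule R H, L ≠ ⊥ →
      ∃ a : R, (∀ x : H, a • x ∈ L) ∧ ∀ x : H, a • x = 0 → x = 0) :
    IsMonoform R H := by
  intro L hL N f hf
  obtain ⟨a, haL, ha⟩ := h L hL
  have hkill : ∀ q : H ⧸ L, a • q = 0 := by
    rintro ⟨y⟩
    exact (Submodule.Quotient.mk_eq_zero L).mpr (haL y)
  refine (Submodule.eq_bot_iff N).mpr fun n hn => ha n ?_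
  have : a • (⟨n, hn⟩ : N) = 0 := hf (by rw [map_smul, hkill, map_zero])
  exact congrArg Subtype.val this

theorem Ideal.Quotient.smul_mem_of_mk_mem {R : Type*} [CommRing R] {I : Ideal R}
    {L : Submodule R (R ⧸ I)} {a : R} (ha : Ideal.Quotient.mk I a ∈ L) (y : R ⧸ I) :
    a • y ∈ L := by
  obtain ⟨b, rfl⟩ := Ideal.Quotient.mk_surjective y
  have : a • Ideal.Quotient.mk I b = b • Ideal.Quotient.mk I a := by
    simp only [Algebra.smul_def, Ideal.Quotient.algebraMap_eq, mul_comm]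
  exact this ▸ L.smul_mem b ha

theorem Ideal.Quotient.eq_zero_of_smul_eq_zero {R : Type*} [CommRing R] {p : Ideal R}
    [p.IsPrime] {a : R} (ha : a ∉ p) {x : R ⧸ p} (hx : a • x = 0) : x = 0 := by
  rw [Algebra.smul_def, Ideal.Quotient.algebraMap_eq, mul_eq_zero,
    Ideal.Quotient.eq_zero_iff_mem] at hx
  exact hx.resolve_left ha

/-- for a prime ideal `p` of a commutative ring `R`, the module `R/p`
is monoform. -/
theorem quotient_prime_isMonoform (R : Type*) [CommRing R] (p : Ideal R)
    [p.IsPrime] : IsMonoform R (R ⧸ p) := by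
  refine isMonoform_of_exists_smul_mem fun L hL => ?_
  obtain ⟨x, hxL, hx0⟩ := Submodule.exists_mem_ne_zero_of_ne_bot hL
  obtain ⟨a, rfl⟩ := Ideal.Quotient.mk_surjective x
  have ha : a ∉ p := fun h => hx0 (Ideal.Quotient.eq_zero_iff_mem.mpr h)
  exact ⟨a, Ideal.Quotient.smul_mem_of_mk_mem hxL,
    fun _ => Ideal.Quotient.eq_zero_of_smul_eq_zero ha⟩
end

section
/- In the category of modules over a ring, every compressible noetherian module is monoform. -/
open scoped BigOperators Classical

/-- A module `M` is compressible if every nonzero submodule of `M` contains a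
submodule isomorphic to `M`. -/
def IsCompressible (R M : Type*) [Ring R] [AddCommGroup M] [Module R M] : Prop :=
  ∀ N : Submodule R M, N ≠ ⊥ →
    ∃ f : M →ₗ[R] M, Function.Injective f ∧ LinearMap.range f ≤ N

/-!
Composing an embedding of `M` into a nonzero submodule `N` with an embedding `N ↪ M ⧸ L` gives an
embedding `α : M ↪ M ⧸ L`. Then `K ↦ π⁻¹ (α K)`, with `π : M → M ⧸ L`, is a strictly monotone
self-map of the submodule lattice of `M` sending `0` to `L`; if `L ≠ 0` it moves `L` strictly
up, which the ascending chain condition forbids.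
-/

theorem StrictMono.not_lt_apply {β : Type*} [Preorder β] [WellFoundedGT β] {f : β → β}
    (hf : StrictMono f) (x : β) : ¬x < f x := by
  intro hx
  obtain ⟨m, hm, hmax⟩ := wellFounded_gt.has_min {y | y < f y} ⟨x, hx⟩
  exact hmax (f m) (hf hm) hm

theorem IsCompressible.exists_injective_of_injective {R M P : Type*} [Ring R] [AddCommGroup M]
    [Module R M] [AddCommGroup P] [Module R P] (hc : IsCompressible R M) {N : Submodule R M}
    (hN : N ≠ ⊥) {f : N →ₗ[R] P} (hf : Function.Injective f) :
    ∃ g : M →ₗ[R] P, Function.Injective g := by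
  obtain ⟨e, he, hrange⟩ := hc N hN
  refine ⟨f ∘ₗ e.codRestrict N fun x ↦ hrange ⟨x, rfl⟩, hf.comp fun x y hxy ↦ he ?_⟩
  exact congrArg Subtype.val hxy

theorem IsNoetherian.eq_bot_of_injective_to_quotient {R M : Type*} [Ring R] [AddCommGroup M]
    [Module R M] [IsNoetherian R M] (L : Submodule R M) {α : M →ₗ[R] M ⧸ L}
    (hα : Function.Injective α) : L = ⊥ := by
  let φ : Submodule R M → Submodule R M := fun K ↦ (K.map α).comap L.mkQ
  have hφ : StrictMono φ :=
    (Submodule.comap_strictMono_of_surjective L.mkQ_surjective).comp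
      (Submodule.map_strictMono_of_injective hα)
  have hφ_bot : φ ⊥ = L := by
    simp only [φ, Submodule.map_bot, Submodule.comap_bot, Submodule.ker_mkQ]
  by_contra hL
  have hL_lt : φ ⊥ < φ L := hφ (bot_lt_iff_ne_bot.mpr hL)
  rw [hφ_bot] at hL_lt
  exact hφ.not_lt_apply L hL_lt

/-- every compressible noetherian module is monoform. -/
theorem compressible_noetherian_isMonoform (R M : Type*) [Ring R] [AddCommGroup M]
    [Module R M] [IsNoetherian R M] (hc : IsCompressible R M) : IsMonoform R M := by
  intro L hL N f hf
  by_contra hN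
  obtain ⟨α, hα⟩ := hc.exists_injective_of_injective hN hf
  exact hL (IsNoetherian.eq_bot_of_injective_to_quotient L hα)
end

section
/- Let Γ be a colored quiver and Γ̃ its extension as in the main construction, with vertex set ℕ × Γ₀ and additional arrows r^i_{v,w} : (i,v) → (i+1,w) of pairwise distinct new colors c_{v,w}. The map sending ∑_{j,v} λ_{(j,v)} x_{(j,v)} to ∑_{j,v} λ_{(j,v)} x_{(j+i,v)} is an isomorphism of right F_{Γ̃}-modules from M_{Γ̃} onto the submodule M_{≥i} = {y ∈ M_{Γ̃} : supp y ⊆ ⋃_{j≥i} ({j} × Γ₀)}. -/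
open scoped BigOperators Classical

/-- The extended colored quiver `Γ̃` of `Γ`: vertices `ℕ × Γ₀`, a copy of the arrows of `Γ`
on each level, and new arrows `r^i_{v,w} : (i,v) → (i+1,w)` with fresh pairwise distinct
colors `c_{v,w}`. -/
def extQuiver (Γ : ColoredQuiver) : ColoredQuiver where
  V := ℕ × Γ.V
  A := (ℕ × Γ.A) ⊕ (ℕ × Γ.V × Γ.V)
  Cl := Γ.Cl ⊕ (Γ.V × Γ.V)
  s := fun a => match a with
    | .inl (i, r) => (i, Γ.s r)
    | .inr (i, v, _) => (i, v)
  t := fun a => match a with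
    | .inl (i, r) => (i, Γ.t r)
    | .inr (i, _, w) => (i + 1, w)
  u := fun a => match a with
    | .inl (_, r) => .inl (Γ.u r)
    | .inr (_, v, w) => .inr (v, w)

/-- The shift map `M_{Γ̃} → M_{Γ̃}`, sending `∑ λ_{(j,v)} x_{(j,v)}` to
`∑ λ_{(j,v)} x_{(j+i,v)}`. -/
noncomputable def shiftMap {K : Type*} [Field K] (Γ : ColoredQuiver) (i : ℕ)
    (y : (extQuiver Γ).V → K) : (extQuiver Γ).V → K :=
  fun p => if i ≤ p.1 then y (p.1 - i, p.2) else 0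

/-!
The shift is the pushforward along the vertex embedding `(j, v) ↦ (i + j, v)` of `Γ̃`, which
extends to a color-preserving embedding of paths (a path is determined by its target and its
list of arrows). Arrows of `Γ̃` never lower the level, so a path starting at level `≥ i` lifts
arrow by arrow through this embedding, while a path starting below level `i` meets the shifted
vector where it vanishes. Hence the sums defining `(shift y) · f` and `shift (y · f)` agree term
by term.
-/

theorem finsum_comp_eq_of_support_subset_range {α β M : Type*} [AddCommMonoid M] {g : β → α}
    (hg : Function.Injective g) {f : α → M} (hf : Function.support f ⊆ Set.range g) :
    ∑ᶠ j, f (g j) = ∑ᶠ i, f i := by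
  rw [← finsum_mem_range hg, ← finsum_mem_univ f]
  exact finsum_mem_inter_support_eq' _ _ _ fun x hx => by simp [hf hx]

namespace CQPath

variable {Δ : ColoredQuiver}

def arrows : ∀ {a b : Δ.V}, CQPath Δ a b → List Δ.A
  | _, _, .nil _ => []
  | _, _, .cons r p => r :: p.arrows

theorem arrows_injective {w : Δ.V} :
    Function.Injective fun p : Σ a, CQPath Δ a w => p.2.arrows := by
  rintro ⟨a, p⟩ ⟨b, q⟩ h
  induction p generalizing b with
  | nil => cases q with
    | nil => rfl
    | cons => simp [arrows] at h
  | cons r p ih => cases q with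
    | nil => simp [arrows] at h
    | cons r' q =>
      obtain ⟨rfl, h⟩ := List.cons_eq_cons.mp h
      cases ih _ q h
      rfl

end CQPath

namespace extQuiver

variable {Γ : ColoredQuiver} (i : ℕ)

def shiftVertex : (extQuiver Γ).V → (extQuiver Γ).V := Prod.map (i + ·) id

def shiftArrow : (extQuiver Γ).A → (extQuiver Γ).A :=
  Sum.map (Prod.map (i + ·) id) (Prod.map (i + ·) id)

def shiftPath : ∀ {a b : (extQuiver Γ).V}, CQPath (extQuiver Γ) a b →
    CQPath (extQuiver Γ) (shiftVertex i a) (shiftVertex i b)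
  | _, _, .nil _ => .nil _
  | _, _, .cons (Sum.inl (j, r)) p =>
    .cons (Γ := extQuiver Γ) (shiftArrow i (Sum.inl (j, r))) (shiftPath p)
  | _, _, .cons (Sum.inr (j, v, w)) p =>
    .cons (Γ := extQuiver Γ) (shiftArrow i (Sum.inr (j, v, w))) (shiftPath p)

theorem shiftVertex_injective : Function.Injective (shiftVertex (Γ := Γ) i) :=
  (add_right_injective i).prodMap Function.injective_id

theorem shiftArrow_injective : Function.Injective (shiftArrow (Γ := Γ) i) :=
  ((add_right_injective i).prodMap Function.injective_id).sumMap
    ((add_right_injective i).prodMap Function.injective_id)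

theorem exists_shiftVertex_eq {p : (extQuiver Γ).V} (h : i ≤ p.1) :
    ∃ q, shiftVertex i q = p := by
  obtain ⟨j, v⟩ := p
  obtain ⟨k, rfl⟩ := Nat.exists_eq_add_of_le h
  exact ⟨(k, v), rfl⟩

theorem exists_shiftArrow_eq (r : (extQuiver Γ).A) (h : i ≤ ((extQuiver Γ).s r).1) :
    ∃ r', shiftArrow i r' = r := by
  rcases r with ⟨j, r⟩ | ⟨j, v, w⟩ <;> obtain ⟨k, rfl⟩ := Nat.exists_eq_add_of_le h
  exacts [⟨Sum.inl (k, r), rfl⟩, ⟨Sum.inr (k, v, w), rfl⟩]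

theorem fst_le_fst_of_path {a b : (extQuiver Γ).V} (p : CQPath (extQuiver Γ) a b) :
    a.1 ≤ b.1 := by
  induction p with
  | nil => rfl
  | cons r p ih =>
    rcases r with ⟨j, r⟩ | ⟨j, v, w⟩
    exacts [ih, (Nat.le_succ j).trans ih]

variable {i}

theorem colors_shiftPath {a b : (extQuiver Γ).V} (p : CQPath (extQuiver Γ) a b) :
    (shiftPath i p).colors = p.colors := by
  induction p with
  | nil => rfl
  | cons r p ih => rcases r with ⟨j, r⟩ | ⟨j, v, w⟩ <;> exact congrArg (_ * ·) ih

theorem arrows_shiftPath {a b : (extQuiver Γ).V} (p : CQPath (extQuiver Γ) a b) :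
    (shiftPath i p).arrows = p.arrows.map (shiftArrow i) := by
  induction p with
  | nil => rfl
  | cons r p ih => rcases r with ⟨j, r⟩ | ⟨j, v, w⟩ <;> exact congrArg (_ :: ·) ih

theorem exists_eq_shiftPath {a b : (extQuiver Γ).V} (q : CQPath (extQuiver Γ) a b)
    (h : i ≤ a.1) : ∃ (a' b' : (extQuiver Γ).V) (p : CQPath (extQuiver Γ) a' b'),
      (⟨a, b, q⟩ : Σ a b, CQPath (extQuiver Γ) a b) =
        ⟨shiftVertex i a', shiftVertex i b', shiftPath i p⟩ := by
  induction q with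
  | nil v =>
    obtain ⟨j, v⟩ := v
    obtain ⟨k, rfl⟩ := Nat.exists_eq_add_of_le h
    exact ⟨(k, v), _, .nil _, rfl⟩
  | cons r q ih =>
    obtain ⟨r', rfl⟩ := exists_shiftArrow_eq i r h
    obtain ⟨a', b', p, hp⟩ := ih (h.trans (fst_le_fst_of_path (.cons _ (.nil _))))
    have ha' : shiftVertex i a' = shiftVertex i ((extQuiver Γ).t r') := by
      rcases r' with ⟨j, r⟩ | ⟨j, v, w⟩ <;> exact (congrArg Sigma.fst hp).symm
    obtain rfl := shiftVertex_injective i ha'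
    refine ⟨_, b', .cons r' p, ?_⟩
    rcases r' with ⟨j, r⟩ | ⟨j, v, w⟩ <;> cases hp <;> rfl

variable (i) in
def shiftPathTo (w : (extQuiver Γ).V) (p : Σ a, CQPath (extQuiver Γ) a w) :
    Σ a, CQPath (extQuiver Γ) a (shiftVertex i w) :=
  ⟨shiftVertex i p.1, shiftPath i p.2⟩

theorem shiftPathTo_injective (w : (extQuiver Γ).V) : Function.Injective (shiftPathTo i w) :=
  fun p q h => CQPath.arrows_injective <|
    List.map_injective_iff.mpr (shiftArrow_injective i) <| by
    simpa only [shiftPathTo, arrows_shiftPath] using congrArg (fun p => p.2.arrows) h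

theorem mem_range_shiftPathTo {w : (extQuiver Γ).V}
    (q : Σ a, CQPath (extQuiver Γ) a (shiftVertex i w)) (h : i ≤ q.1.1) : q ∈ Set.range (shiftPathTo i w) := by
  obtain ⟨a, q⟩ := q
  obtain ⟨a', b', p, hp⟩ := exists_eq_shiftPath q h
  obtain rfl := shiftVertex_injective i (congrArg (·.2.1) hp)
  exact ⟨⟨a', p⟩, by cases hp; rfl⟩

end extQuiver

open extQuiver

section shiftMap

variable {K : Type*} [Field K] {Γ : ColoredQuiver} {i : ℕ}

@[simp]
theorem shiftMap_shiftVertex (y : (extQuiver Γ).V → K) (p : (extQuiver Γ).V) :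
    shiftMap Γ i y (shiftVertex i p) = y p := by
  show (if i ≤ i + p.1 then y (i + p.1 - i, p.2) else 0) = y p
  rw [if_pos (Nat.le_add_right _ _), Nat.add_sub_cancel_left]
  rfl

theorem shiftMap_of_lt (y : (extQuiver Γ).V → K) {p : (extQuiver Γ).V} (h : p.1 < i) :
    shiftMap Γ i y p = 0 :=
  if_neg h.not_ge

theorem shiftMap_injective : Function.Injective (shiftMap (K := K) Γ i) :=
  fun y z h => funext fun p => by simpa using congrFun h (shiftVertex i p)

theorem range_shiftMap :
    Set.range (shiftMap (K := K) Γ i) = {y | ∀ p : ℕ × Γ.V, y p ≠ 0 → i ≤ p.1} := by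
  ext y
  constructor
  · rintro ⟨z, rfl⟩ p hp
    by_contra hlt
    exact hp (shiftMap_of_lt z (not_le.mp hlt))
  · intro hy
    refine ⟨fun p => y (shiftVertex i p), funext fun p => ?_⟩
    rcases lt_or_ge p.1 i with hp | hp
    · rw [shiftMap_of_lt _ hp]
      by_contra hne
      exact hp.not_ge (hy _ (Ne.symm hne))
    · obtain ⟨q, rfl⟩ := exists_shiftVertex_eq i hp
      exact shiftMap_shiftVertex _ q

theorem shiftMap_add (y z : (extQuiver Γ).V → K) :
    shiftMap Γ i (y + z) = shiftMap Γ i y + shiftMap Γ i z := by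
  funext p
  show shiftMap Γ i (y + z) p = shiftMap Γ i y p + shiftMap Γ i z p
  unfold shiftMap
  split_ifs
  exacts [rfl, (add_zero 0).symm]

theorem shiftMap_smul (a : K) (y : (extQuiver Γ).V → K) :
    shiftMap Γ i (a • y) = a • shiftMap Γ i y := by
  funext p
  show shiftMap Γ i (a • y) p = a • shiftMap Γ i y p
  unfold shiftMap
  split_ifs
  exacts [rfl, (smul_zero a).symm]

theorem shiftMap_cqAct (y : (extQuiver Γ).V → K) (f : FreeMonoid (extQuiver Γ).Cl → K) :
    shiftMap Γ i (cqAct y f) = cqAct (shiftMap Γ i y) f := by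
  funext w
  rcases lt_or_ge w.1 i with hw | hw
  · rw [shiftMap_of_lt _ hw]
    refine (finsum_eq_zero_of_forall_eq_zero fun ⟨a, q⟩ => ?_).symm
    rw [shiftMap_of_lt _ ((fst_le_fst_of_path q).trans_lt hw), mul_zero]
  · obtain ⟨w, rfl⟩ := exists_shiftVertex_eq i hw
    rw [shiftMap_shiftVertex, cqAct, cqAct,
      ← finsum_comp_eq_of_support_subset_range (shiftPathTo_injective w)]
    · simp [shiftPathTo, colors_shiftPath]
    · refine fun q hq => mem_range_shiftPathTo q (not_lt.mp fun hlt => hq ?_)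
      simp only [shiftMap_of_lt y hlt, mul_zero]

end shiftMap

/-- the shift map is an isomorphism of right `F_{Γ̃}`-modules from
`M_{Γ̃}` onto the submodule `M_{≥ i}` of elements supported in levels `≥ i`. -/
theorem shiftMap_iso (K : Type*) [Field K] (Γ : ColoredQuiver) (i : ℕ) :
    Function.Injective (shiftMap (K := K) Γ i) ∧
    (Set.range (shiftMap (K := K) Γ i) =
      {y : (extQuiver Γ).V → K | ∀ p : ℕ × Γ.V, y p ≠ 0 → i ≤ p.1}) ∧
    (∀ y z : (extQuiver Γ).V → K,
      shiftMap Γ i (y + z) = shiftMap Γ i y + shiftMap Γ i z) ∧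
    (∀ (a : K) (y : (extQuiver Γ).V → K),
      shiftMap Γ i (a • y) = a • shiftMap Γ i y) ∧
    (∀ (y : (extQuiver Γ).V → K) (f : FreeMonoid (extQuiver Γ).Cl → K),
      Admissible (extQuiver Γ) f →
        shiftMap Γ i (cqAct y f) = cqAct (shiftMap Γ i y) f) :=
  ⟨shiftMap_injective, range_shiftMap, shiftMap_add, shiftMap_smul,
    fun y f _ => shiftMap_cqAct y f⟩
end

section
/- With Γ̃ as in the main construction, every nonzero F_{Γ̃}-submodule L of M_{Γ̃} decomposes as L = (L ∩ M_i) ⊕ M_{≥i+1}, where i is the smallest natural number such that some y ∈ L has (supp y) ∩ ({i} × Γ₀) ≠ ∅, M_i = {y : supp y ⊆ {i} × Γ₀}, and M_{≥i+1} = {y : supp y ⊆ ⋃_{j≥i+1}({j} × Γ₀)}. -/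
open scoped BigOperators Classical

/-!
Let `i` be the lowest level met by `L` and `y ∈ L` with `y (i, v₀) ≠ 0`. Act on `y` by
`f = ∑_{w,k} c_{w,k} c_{v₀,w} c_{w,w}^k`: a path to `(j, w)` with word `c_{v₀,w} c_{w,w}^k` is
unique and starts at `(j - k - 1, v₀)`, so `f` is admissible and the `w`-column of `y · f` is the
power series `X · C_w · Y`, where `Y = ∑ₛ y (s, v₀) Xˢ` and `C_w = ∑ₖ c_{w,k} Xᵏ`. As `Y` has order
exactly `i`, `X · Y` divides every power series of order `≥ i + 1`, so every vector supported on the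
levels `≥ i + 1` is of the form `y · f` and lies in `L`. Then `z ∈ L` splits as the difference of
`z` and its part on the levels `≥ i + 1`, which lives on level `i`, plus that part.
-/

open PowerSeries in
theorem PowerSeries.dvd_of_X_pow_dvd_of_coeff_ne_zero {K : Type*} [Field K] {Y Z : K⟦X⟧}
    {i : ℕ} (hY : X ^ i ∣ Y) (hYi : coeff i Y ≠ 0) (hZ : X ^ i ∣ Z) : Y ∣ Z := by
  obtain ⟨Y', rfl⟩ := hY
  have hunit : IsUnit Y' := by
    rw [isUnit_iff_constantCoeff, ← coeff_zero_eq_constantCoeff_apply, isUnit_iff_ne_zero]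
    simpa [coeff_X_pow_mul'] using hYi
  exact hunit.mul_right_dvd.mpr hZ

namespace CQPath

variable {Γ : ColoredQuiver}

@[simp]
theorem toList_colors_nil (v : Γ.V) : (CQPath.nil (Γ := Γ) v).colors.toList = [] := rfl

@[simp]
theorem toList_colors_cons (r : Γ.A) {w : Γ.V} (p : CQPath Γ (Γ.t r) w) :
    (CQPath.cons r p).colors.toList = Γ.u r :: p.colors.toList := rfl

end CQPath

namespace extQuiver

variable {Γ : ColoredQuiver}

/-- The color `c_{v,w}` of the arrows `(i,v) → (i+1,w)`. -/
def shiftColor (v w : Γ.V) : (extQuiver Γ).Cl := Sum.inr (v, w)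

theorem shiftColor_injective : Function.Injective (Function.uncurry (shiftColor (Γ := Γ))) :=
  fun _ _ h => Sum.inr_injective h

theorem eq_inr_of_u_eq_shiftColor {r : (extQuiver Γ).A} {v w : Γ.V}
    (h : (extQuiver Γ).u r = shiftColor v w) : ∃ m, r = Sum.inr (m, v, w) := by
  rcases r with ⟨m, r⟩ | ⟨m, v', w'⟩
  · simp [extQuiver, shiftColor] at h
  · obtain ⟨rfl, rfl⟩ := Prod.mk.inj (Sum.inr_injective h)
    exact ⟨m, rfl⟩

theorem eq_of_colors_eq_replicate {a b : (extQuiver Γ).V} (p : CQPath (extQuiver Γ) a b)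
    {w : Γ.V} {k : ℕ} (hp : p.colors.toList = List.replicate k (shiftColor w w)) (ha : a.2 = w) :
    b = (a.1 + k, w) := by
  induction p generalizing k with
  | nil v =>
    cases k with
    | zero => exact Prod.ext rfl ha
    | succ k => simp [List.replicate_succ] at hp
  | cons r q ih =>
    cases k with
    | zero => simp at hp
    | succ k =>
      obtain ⟨hr, hq⟩ := List.cons.inj hp
      obtain ⟨m, rfl⟩ := eq_inr_of_u_eq_shiftColor hr
      rw [ih hq rfl]
      simp only [extQuiver, Prod.mk.injEq, and_true]
      omega

def shiftWord (v w : Γ.V) (k : ℕ) : List (extQuiver Γ).Cl :=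
  shiftColor v w :: List.replicate k (shiftColor w w)

theorem length_shiftWord (v w : Γ.V) (k : ℕ) : (shiftWord v w k).length = k + 1 := by
  simp [shiftWord]

theorem shiftWord_injective (v : Γ.V) :
    Function.Injective (fun wk : Γ.V × ℕ => shiftWord v wk.1 wk.2) := by
  rintro ⟨w, k⟩ ⟨w', k'⟩ h
  replace h : shiftWord v w k = shiftWord v w' k' := h
  obtain ⟨hw, hk⟩ := List.cons.inj h
  obtain rfl : w = w' := (Prod.mk.inj (shiftColor_injective hw)).2
  rw [List.replicate_left_inj.mp hk]

theorem exists_eq_shiftColor_of_mem_shiftWord {v w : Γ.V} {k : ℕ} {x : (extQuiver Γ).Cl}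
    (hx : x ∈ shiftWord v w k) : ∃ v' w', x = shiftColor v' w' := by
  rcases List.mem_cons.mp hx with rfl | hx
  · exact ⟨v, w, rfl⟩
  · exact ⟨w, w, List.eq_of_mem_replicate hx⟩

theorem eq_of_colors_eq_shiftWord {a b : (extQuiver Γ).V} (p : CQPath (extQuiver Γ) a b)
    {v w : Γ.V} {k : ℕ} (hp : p.colors.toList = shiftWord v w k) :
    a.2 = v ∧ b = (a.1 + k + 1, w) := by
  cases p with
  | nil => simp [shiftWord] at hp
  | cons r q =>
    obtain ⟨hr, hq⟩ := List.cons.inj hp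
    obtain ⟨m, rfl⟩ := eq_inr_of_u_eq_shiftColor hr
    refine ⟨rfl, ?_⟩
    rw [eq_of_colors_eq_replicate q hq rfl]
    simp only [extQuiver, Prod.mk.injEq, and_true]
    omega

theorem exists_path_colors_eq_replicate (w : Γ.V) (k s : ℕ) :
    ∃ p : CQPath (extQuiver Γ) (s, w) (s + k, w),
      p.colors.toList = List.replicate k (shiftColor w w) := by
  induction k generalizing s with
  | zero => exact ⟨.nil _, rfl⟩
  | succ k ih =>
    obtain ⟨p, hp⟩ := ih (s + 1)
    rw [show s + (k + 1) = s + 1 + k by omega]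
    exact ⟨.cons (Γ := extQuiver Γ) (Sum.inr (s, w, w)) p, congrArg (List.cons _) hp⟩

theorem exists_path_colors_eq_shiftWord (v w : Γ.V) {k s n : ℕ} (hn : s + k + 1 = n) :
    ∃ p : CQPath (extQuiver Γ) (s, v) (n, w), p.colors.toList = shiftWord v w k := by
  obtain ⟨p, hp⟩ := exists_path_colors_eq_replicate w k (s + 1)
  rw [← hn, show s + k + 1 = s + 1 + k by omega]
  exact ⟨.cons (Γ := extQuiver Γ) (Sum.inr (s, v, w)) p, congrArg (List.cons _) hp⟩

theorem sigma_eq_of_colors_eq {a a' b : (extQuiver Γ).V} (p : CQPath (extQuiver Γ) a b)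
    (q : CQPath (extQuiver Γ) a' b) (h : p.colors.toList = q.colors.toList)
    (hshift : ∀ x ∈ p.colors.toList, ∃ v w, x = shiftColor v w) :
    (⟨a, p⟩ : Σ a, CQPath (extQuiver Γ) a b) = ⟨a', q⟩ := by
  induction p generalizing a' with
  | nil => cases q with
    | nil => rfl
    | cons => simp at h
  | cons r p ih => cases q with
    | nil => simp at h
    | cons r' q =>
      obtain ⟨hr, hpq⟩ := List.cons.inj h
      obtain ⟨v, w, hvw⟩ := hshift _ List.mem_cons_self
      obtain ⟨m, rfl⟩ := eq_inr_of_u_eq_shiftColor hvw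
      obtain ⟨m', rfl⟩ := eq_inr_of_u_eq_shiftColor (hr.symm.trans hvw)
      obtain ⟨hm, hpq'⟩ := Sigma.mk.inj
        (ih q hpq fun x hx => hshift x (List.mem_cons_of_mem _ hx))
      obtain rfl : m = m' := by simpa [extQuiver] using hm
      rw [eq_of_heq hpq']

section shiftSeries

variable {K : Type*} [Field K]

/-- The element `∑_{w,k} c w k · c_{v₀,w} c_{w,w}^k` of `K⟨⟨C⟩⟩`. -/
noncomputable def shiftSeries (v₀ : Γ.V) (c : Γ.V → ℕ → K) (m : FreeMonoid (extQuiver Γ).Cl) :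
    K :=
  Function.extend (fun wk : Γ.V × ℕ => shiftWord v₀ wk.1 wk.2) (fun wk => c wk.1 wk.2) 0 m.toList

variable {v₀ : Γ.V} {c : Γ.V → ℕ → K}

theorem shiftSeries_of_toList_eq {m : FreeMonoid (extQuiver Γ).Cl} {w : Γ.V} {k : ℕ}
    (hm : m.toList = shiftWord v₀ w k) : shiftSeries v₀ c m = c w k := by
  rw [shiftSeries, hm]
  exact (shiftWord_injective v₀).extend_apply _ _ (w, k)

theorem exists_toList_eq_of_shiftSeries_ne_zero {m : FreeMonoid (extQuiver Γ).Cl}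
    (hm : shiftSeries v₀ c m ≠ 0) : ∃ w k, m.toList = shiftWord v₀ w k := by
  by_contra hword
  exact hm (Function.extend_apply' _ _ _ fun ⟨⟨w, k⟩, hwk⟩ => hword ⟨w, k, hwk.symm⟩)

theorem exists_of_shiftSeries_colors_ne_zero {j : ℕ} {w : Γ.V}
    (σ : Σ a, CQPath (extQuiver Γ) a (j, w)) (hσ : shiftSeries v₀ c σ.2.colors ≠ 0) :
    ∃ k s, σ.2.colors.toList = shiftWord v₀ w k ∧ σ.1 = (s, v₀) ∧ s + k + 1 = j := by
  obtain ⟨w', k, hk⟩ := exists_toList_eq_of_shiftSeries_ne_zero hσ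
  obtain ⟨hsrc, htgt⟩ := eq_of_colors_eq_shiftWord σ.2 hk
  obtain ⟨hj, rfl⟩ := Prod.mk.inj htgt
  exact ⟨k, σ.1.1, hk, Prod.ext rfl hsrc, hj.symm⟩

/-- The label `(k, s)` of a path `(s, v₀) → (s + k + 1, w)` with word `shiftWord v₀ w k`. -/
def shiftLabel {b : (extQuiver Γ).V} (σ : Σ a, CQPath (extQuiver Γ) a b) : ℕ × ℕ :=
  (σ.2.colors.toList.length - 1, σ.1.1)

theorem shiftLabel_injOn (j : ℕ) (w : Γ.V) :
    Set.InjOn shiftLabel {σ : Σ a, CQPath (extQuiver Γ) a (j, w) |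
      shiftSeries v₀ c σ.2.colors ≠ 0} := by
  intro σ hσ τ hτ hστ
  obtain ⟨k, s, hσk, -, -⟩ := exists_of_shiftSeries_colors_ne_zero σ hσ
  obtain ⟨k', s', hτk, -, -⟩ := exists_of_shiftSeries_colors_ne_zero τ hτ
  have hkk : k = k' := by simpa [shiftLabel, hσk, hτk, length_shiftWord] using congrArg Prod.fst hστ
  subst hkk
  exact sigma_eq_of_colors_eq σ.2 τ.2 (hσk.trans hτk.symm)
    fun x hx => exists_eq_shiftColor_of_mem_shiftWord (hσk ▸ hx)

theorem admissible_shiftSeries (v₀ : Γ.V) (c : Γ.V → ℕ → K) :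
    Admissible (extQuiver Γ) (shiftSeries v₀ c) := by
  rintro ⟨j, w⟩
  refine Set.Finite.of_finite_image ?_ (shiftLabel_injOn j w)
  refine ((Set.finite_Iio j).prod (Set.finite_Iio j)).subset ?_
  rintro _ ⟨σ, hσ, rfl⟩
  obtain ⟨k, s, hk, hs, hj⟩ := exists_of_shiftSeries_colors_ne_zero σ hσ
  simp only [shiftLabel, hk, hs, length_shiftWord, Set.mem_prod, Set.mem_Iio]
  omega

open PowerSeries in
theorem cqAct_shiftSeries (y : (extQuiver Γ).V → K) (v₀ : Γ.V) (c : Γ.V → ℕ → K) (j : ℕ)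
    (w : Γ.V) :
    cqAct y (shiftSeries v₀ c) (j, w) = coeff j (X * (mk (c w) * mk fun s => y (s, v₀))) := by
  rcases j with _ | j
  · rw [coeff_zero_X_mul]
    refine finsum_eq_zero_of_forall_eq_zero fun σ => by_contra fun hσ => ?_
    obtain ⟨k, s, -, -, hj⟩ := exists_of_shiftSeries_colors_ne_zero σ (left_ne_zero_of_mul hσ)
    omega
  have hfin : (Function.support fun σ : Σ a, CQPath (extQuiver Γ) a (j + 1, w) =>
      shiftSeries v₀ c σ.2.colors * y σ.1).Finite :=
    (admissible_shiftSeries v₀ c (j + 1, w)).subset fun σ hσ => left_ne_zero_of_mul hσ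
  rw [coeff_succ_X_mul, coeff_mul]
  unfold cqAct
  rw [finsum_eq_sum _ hfin]
  refine Finset.sum_bij_ne_zero (fun σ _ _ => shiftLabel σ) ?_ ?_ ?_ ?_
  · intro σ _ hσ
    obtain ⟨k, s, hk, hs, hj⟩ := exists_of_shiftSeries_colors_ne_zero σ (left_ne_zero_of_mul hσ)
    simp only [shiftLabel, hk, hs, length_shiftWord, Finset.HasAntidiagonal.mem_antidiagonal]
    omega
  · exact fun σ _ hσ τ _ hτ => shiftLabel_injOn (j + 1) w (left_ne_zero_of_mul hσ)
      (left_ne_zero_of_mul hτ)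
  · rintro ⟨k, s⟩ hks hne
    rw [Finset.HasAntidiagonal.mem_antidiagonal] at hks
    obtain ⟨p, hp⟩ := exists_path_colors_eq_shiftWord v₀ w (show s + k + 1 = j + 1 by omega)
    have hterm : shiftSeries v₀ c p.colors * y (s, v₀) ≠ 0 := by
      simpa [shiftSeries_of_toList_eq hp] using hne
    refine ⟨⟨(s, v₀), p⟩, hfin.mem_toFinset.mpr hterm, hterm, ?_⟩
    simp [shiftLabel, hp, length_shiftWord]
  · intro σ _ hσ
    obtain ⟨k, s, hk, hs, -⟩ := exists_of_shiftSeries_colors_ne_zero σ (left_ne_zero_of_mul hσ)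
    simp [shiftLabel, hk, hs, length_shiftWord, shiftSeries_of_toList_eq hk]

end shiftSeries

end extQuiver

open PowerSeries in
theorem exists_cqAct_shiftSeries_eq {K : Type*} [Field K] {Γ : ColoredQuiver}
    {y : (extQuiver Γ).V → K} {i : ℕ} {v₀ : Γ.V} (hyi : y (i, v₀) ≠ 0)
    (hy : ∀ j < i, ∀ v, y (j, v) = 0) {z : (extQuiver Γ).V → K}
    (hz : ∀ p : ℕ × Γ.V, z p ≠ 0 → i + 1 ≤ p.1) :
    ∃ c, cqAct y (extQuiver.shiftSeries v₀ c) = z := by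
  set Y : K⟦X⟧ := mk fun s => y (s, v₀)
  have hdvd (w : Γ.V) : X * Y ∣ mk fun j => z (j, w) := by
    refine dvd_of_X_pow_dvd_of_coeff_ne_zero (i := i + 1) (X_pow_dvd_iff.mpr fun s hs => ?_) ?_
      (X_pow_dvd_iff.mpr fun s hs => ?_)
    · rcases s with _ | s
      · exact coeff_zero_X_mul Y
      · rw [coeff_succ_X_mul, coeff_mk, hy s (by omega)]
    · rwa [coeff_succ_X_mul, coeff_mk]
    · rw [coeff_mk]
      by_contra h
      have := hz _ h
      omega
  choose C hC using hdvd
  refine ⟨fun w k => coeff k (C w), funext fun ⟨j, w⟩ => ?_⟩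
  have hCw : mk (fun k => coeff k (C w)) = C w := ext fun k => coeff_mk k _
  rw [extQuiver.cqAct_shiftSeries, hCw, ← coeff_mk j fun j => z (j, w), hC w, mul_left_comm,
    mul_comm (C w)]

theorem mem_iff_exists_eq_add_of_upper_subset {K V : Type*} [Field K] {L : Set (ℕ × V → K)}
    (hadd : ∀ y ∈ L, ∀ z ∈ L, y + z ∈ L) (hsmul : ∀ (a : K), ∀ y ∈ L, a • y ∈ L) {i : ℕ}
    (hmin : ∀ j < i, ∀ y ∈ L, ∀ v, y (j, v) = 0)
    (hupper : ∀ z : ℕ × V → K, (∀ p : ℕ × V, z p ≠ 0 → i + 1 ≤ p.1) → z ∈ L) (z : ℕ × V → K) :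
    z ∈ L ↔ ∃ z₁ ∈ L, ∃ z₂ : ℕ × V → K,
      (∀ p : ℕ × V, z₁ p ≠ 0 → p.1 = i) ∧ (∀ p : ℕ × V, z₂ p ≠ 0 → i + 1 ≤ p.1) ∧
        z = z₁ + z₂ := by
  refine ⟨fun hz => ?_, fun ⟨z₁, hz₁, z₂, _, hz₂, hz⟩ => hz ▸ hadd z₁ hz₁ z₂ (hupper z₂ hz₂)⟩
  set z₂ : ℕ × V → K := fun p => if i + 1 ≤ p.1 then z p else 0
  have hz₂ (p : ℕ × V) (hp : z₂ p ≠ 0) : i + 1 ≤ p.1 := by_contra fun h => hp (if_neg h)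
  refine ⟨z + (-1 : K) • z₂, hadd z hz _ (hsmul _ _ (hupper z₂ hz₂)), z₂, fun p hp => ?_, hz₂,
    by simp⟩
  refine by_contra fun hpi => hp ?_
  rw [Pi.add_apply, Pi.smul_apply, neg_one_smul, ← sub_eq_add_neg, sub_eq_zero]
  rcases Nat.lt_or_gt_of_ne hpi with hlt | hgt
  · exact (hmin p.1 hlt z hz p.2).trans (if_neg (by omega)).symm
  · exact (if_pos hgt).symm

theorem submodule_decomposition_general (K : Type*) [Field K] (Γ : ColoredQuiver)
    (L : Set ((extQuiver Γ).V → K))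
    (hadd : ∀ y ∈ L, ∀ z ∈ L, y + z ∈ L)
    (hsmul : ∀ (a : K), ∀ y ∈ L, a • y ∈ L)
    (hact : ∀ y ∈ L, ∀ f : FreeMonoid (extQuiver Γ).Cl → K,
      Admissible (extQuiver Γ) f → cqAct y f ∈ L)
    (hne : ∃ y ∈ L, y ≠ 0) :
    ∃ i : ℕ,
      (∃ y ∈ L, ∃ v : Γ.V, y (i, v) ≠ 0) ∧
      (∀ j < i, ∀ y ∈ L, ∀ v : Γ.V, y (j, v) = 0) ∧
      (∀ z : (extQuiver Γ).V → K, z ∈ L ↔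
        ∃ z₁ ∈ L, ∃ z₂ : (extQuiver Γ).V → K,
          (∀ p : ℕ × Γ.V, z₁ p ≠ 0 → p.1 = i) ∧
          (∀ p : ℕ × Γ.V, z₂ p ≠ 0 → i + 1 ≤ p.1) ∧
          z = z₁ + z₂) := by
  have hlevel : ∃ i, ∃ y ∈ L, ∃ v, y (i, v) ≠ 0 := by
    obtain ⟨y, hyL, hy⟩ := hne
    obtain ⟨⟨i, v⟩, hv⟩ := Function.ne_iff.mp hy
    exact ⟨i, y, hyL, v, hv⟩
  set i := Nat.find hlevel
  have hmin : ∀ j < i, ∀ y ∈ L, ∀ v, y (j, v) = 0 := fun j hj y hyL v =>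
    by_contra fun hy => Nat.find_min hlevel hj ⟨y, hyL, v, hy⟩
  obtain ⟨y, hyL, v₀, hy⟩ := Nat.find_spec hlevel
  have hupper (z : (extQuiver Γ).V → K) (hz : ∀ p : ℕ × Γ.V, z p ≠ 0 → i + 1 ≤ p.1) : z ∈ L := by
    obtain ⟨c, rfl⟩ := exists_cqAct_shiftSeries_eq hy (fun j hj => hmin j hj y hyL) hz
    exact hact y hyL _ (extQuiver.admissible_shiftSeries v₀ c)
  exact ⟨i, ⟨y, hyL, v₀, hy⟩, hmin, mem_iff_exists_eq_add_of_upper_subset hadd hsmul hmin hupper⟩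

/-- every nonzero `F_{Γ̃}`-submodule `L` of `M_{Γ̃}` decomposes as
`L = (L ∩ M_i) ⊕ M_{≥ i+1}`, where `i` is the smallest level met by the support of
an element of `L`. -/
theorem submodule_decomposition (K : Type*) [Field K] (Γ : ColoredQuiver)
    (L : Set ((extQuiver Γ).V → K))
    (h0 : (0 : (extQuiver Γ).V → K) ∈ L)
    (hadd : ∀ y ∈ L, ∀ z ∈ L, y + z ∈ L)
    (hsmul : ∀ (a : K), ∀ y ∈ L, a • y ∈ L)
    (hact : ∀ y ∈ L, ∀ f : FreeMonoid (extQuiver Γ).Cl → K,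
      Admissible (extQuiver Γ) f → cqAct y f ∈ L)
    (hne : ∃ y ∈ L, y ≠ 0) :
    ∃ i : ℕ,
      (∃ y ∈ L, ∃ v : Γ.V, y (i, v) ≠ 0) ∧
      (∀ j < i, ∀ y ∈ L, ∀ v : Γ.V, y (j, v) = 0) ∧
      (∀ z : (extQuiver Γ).V → K, z ∈ L ↔
        ∃ z₁ ∈ L, ∃ z₂ : (extQuiver Γ).V → K,
          (∀ p : ℕ × Γ.V, z₁ p ≠ 0 → p.1 = i) ∧
          (∀ p : ℕ × Γ.V, z₂ p ≠ 0 → i + 1 ≤ p.1) ∧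
          z = z₁ + z₂) :=
  submodule_decomposition_general K Γ L hadd hsmul hact hne
end

section
/- Let M be a module over a ring with a descending filtration M = M₀ ⊇ M₁ ⊇ M₂ ⊇ ⋯ such that (a) every nonzero submodule of M contains some M_{i}, and (b) each quotient M_i / M_{i+1} is a noetherian module. Then M is a noetherian module. -/
/-!
Each `M ⧸ F i` is noetherian, being an iterated extension of the noetherian subquotients
`F j ⧸ F (j + 1)`. A strictly increasing chain of submodules is nonzero from its second term
on, so it eventually lies above some `F i`, where it becomes a strictly increasing chain of
submodules of the noetherian module `M ⧸ F i`.
-/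

theorem wellFoundedGT_of_forall_ne_bot_exists_le {α : Type*} [PartialOrder α] [OrderBot α]
    (h : ∀ a : α, a ≠ ⊥ → ∃ p ≤ a, WellFoundedGT (Set.Ici p)) : WellFoundedGT α := by
  rw [WellFoundedGT, isWellFounded_iff, RelEmbedding.wellFounded_iff_isEmpty]
  refine ⟨fun f => ?_⟩
  have hf : StrictMono f := fun _ _ hmn => f.map_rel_iff.2 hmn
  obtain ⟨p, hp, _⟩ := h (f 1) (hf zero_lt_one).ne_bot
  let g : ℕ → Set.Ici p := fun n => ⟨f (n + 1), hp.trans (hf.monotone (Nat.le_add_left 1 n))⟩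
  exact not_strictMono_of_wellFoundedGT g fun _ _ hmn => hf (Nat.succ_lt_succ hmn)

namespace Submodule

variable {R M : Type*} [Ring R] [AddCommGroup M] [Module R M]

theorem isNoetherian_of_forall_ne_bot_exists_le
    (h : ∀ N : Submodule R M, N ≠ ⊥ → ∃ P ≤ N, IsNoetherian R (M ⧸ P)) :
    IsNoetherian R M := by
  rw [isNoetherian_iff']
  refine wellFoundedGT_of_forall_ne_bot_exists_le fun N hN => ?_
  obtain ⟨P, hPN, hP⟩ := h N hN
  rw [isNoetherian_iff'] at hP
  exact ⟨P, hPN, (comapMkQRelIso P).symm.strictMono.wellFoundedGT⟩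

theorem isNoetherian_quotient_of_le {N N' : Submodule R M} (h : N ≤ N')
    [IsNoetherian R (N' ⧸ N.comap N'.subtype)] [IsNoetherian R (M ⧸ N')] :
    IsNoetherian R (M ⧸ N) := by
  have hrange : LinearMap.range ((N.comap N'.subtype).liftQ (N.mkQ ∘ₗ N'.subtype)
      (by rw [LinearMap.ker_comp, ker_mkQ])) = N'.map N.mkQ := by
    rw [range_liftQ, LinearMap.range_comp, range_subtype]
  rw [isNoetherian_iff_submodule_quotient (N'.map N.mkQ)]
  exact ⟨hrange ▸ inferInstance,
    isNoetherian_of_linearEquiv (quotientQuotientEquivQuotient N N' h).symm⟩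

theorem isNoetherian_quotient_of_filtration (F : ℕ → Submodule R M) (h0 : F 0 = ⊤)
    (hdec : ∀ i, F (i + 1) ≤ F i)
    (hgr : ∀ i, IsNoetherian R (F i ⧸ (F (i + 1)).comap (F i).subtype)) (i : ℕ) :
    IsNoetherian R (M ⧸ F i) := by
  induction i with
  | zero =>
    have : Subsingleton (M ⧸ F 0) := Quotient.subsingleton_iff.2 h0
    infer_instance
  | succ i ih =>
    have := hgr i
    exact isNoetherian_quotient_of_le (hdec i)

end Submodule

/-- a module with a descending filtration `M = M₀ ⊇ M₁ ⊇ ⋯` such that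
every nonzero submodule contains some `M_i` and each `M_i/M_{i+1}` is noetherian, is
itself noetherian. -/
theorem noetherian_of_filtration (R M : Type*) [Ring R] [AddCommGroup M] [Module R M]
    (F : ℕ → Submodule R M) (h0 : F 0 = ⊤) (hdec : ∀ i, F (i + 1) ≤ F i)
    (ha : ∀ N : Submodule R M, N ≠ ⊥ → ∃ i, F i ≤ N)
    (hb : ∀ i, IsNoetherian R
      ((F i) ⧸ (Submodule.comap (F i).subtype (F (i + 1))))) :
    IsNoetherian R M := by
  refine Submodule.isNoetherian_of_forall_ne_bot_exists_le fun N hN => ?_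
  obtain ⟨i, hi⟩ := ha N hN
  exact ⟨F i, hi, Submodule.isNoetherian_quotient_of_filtration F h0 hdec hb i⟩
end
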